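/- arXiv:1507.06695 — 3 statements merged into one kernel-verified Lean document; each statement's English description precedes it below -/
import Mathlib

section
/- The stereographic hollowball projection Π(t,x,y,z) = (x,y,z)/δ with δ = t + √(2t²+1) maps de Sitter space S^3_1 into the open annular region D³ = {ξ ∈ R³ : √2 − 1 < |ξ| < √2 + 1}. -/
/-- The stereographic hollowball projection maps S³₁ into
D³ = {ξ : √2 − 1 < |ξ| < √2 + 1}. -/
theorem stmt2 (t x y z : ℝ) (h : -t^2 + x^2 + y^2 + z^2 = 1) :
    Real.sqrt 2 - 1 <
      Real.sqrt ((x / (t + Real.sqrt (2*t^2 + 1)))^2 +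
                 (y / (t + Real.sqrt (2*t^2 + 1)))^2 +
                 (z / (t + Real.sqrt (2*t^2 + 1)))^2) ∧
    Real.sqrt ((x / (t + Real.sqrt (2*t^2 + 1)))^2 +
               (y / (t + Real.sqrt (2*t^2 + 1)))^2 +
               (z / (t + Real.sqrt (2*t^2 + 1)))^2) < Real.sqrt 2 + 1 := by
  set s := Real.sqrt (2*t^2 + 1) with hs
  have hs0 : 0 ≤ s := Real.sqrt_nonneg _
  have hs2 : s^2 = 2*t^2 + 1 := Real.sq_sqrt (by positivity)
  clear_value s
  clear hs
  have hs1 : 1 ≤ s := by nlinarith [sq_nonneg t]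
  have hr2 : (Real.sqrt 2)^2 = 2 := Real.sq_sqrt (by norm_num)
  have hr0 : 1 < Real.sqrt 2 := by nlinarith [Real.sqrt_nonneg 2]
  have hr0pos : 0 < Real.sqrt 2 := by positivity
  have hmm : Real.sqrt 2 * Real.sqrt 2 = 2 := Real.mul_self_sqrt (by norm_num)
  -- key fact: √2 t < s
  have hab : (s - Real.sqrt 2 * t) * (s + Real.sqrt 2 * t) = 1 := by
    have : (s - Real.sqrt 2 * t) * (s + Real.sqrt 2 * t)
        = s^2 - (Real.sqrt 2 * Real.sqrt 2) * t^2 := by ring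
    rw [this, hmm, hs2]; ring
  have hst : Real.sqrt 2 * t < s := by nlinarith [hab, hs1]
  have hδ : 0 < t + s := by nlinarith [hst, hr0, hs1]
  have hst2 : 2 * t < Real.sqrt 2 * s := by
    have := mul_lt_mul_of_pos_left hst hr0pos
    rw [← mul_assoc, hmm] at this
    linarith
  have hr2t : Real.sqrt 2 ^ 2 * t = 2 * t := by rw [hr2]
  have hprod : 0 < (Real.sqrt 2 - 1) * (s - Real.sqrt 2 * t) :=
    mul_pos (by linarith) (by linarith)
  have h1 : (Real.sqrt 2 - 1)^2 * (t + s) < s - t := by nlinarith [hprod, hr2t, hr2]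
  have hst' : 0 < s + Real.sqrt 2 * t := by nlinarith [hab, hs1]
  have hst2' : -(Real.sqrt 2 * s) < 2 * t := by
    have := mul_lt_mul_of_pos_left hst' hr0pos
    rw [mul_add, ← mul_assoc, hmm] at this
    linarith
  have h2 : s - t < (Real.sqrt 2 + 1)^2 * (t + s) := by nlinarith [hst', hst2', hr2]
  have hsum : (x / (t + s))^2 + (y / (t + s))^2 + (z / (t + s))^2
      = (1 + t^2) / (t + s)^2 := by
    field_simp
    nlinarith [h]
  rw [hsum]
  have hδ2 : 0 < (t + s)^2 := by positivity
  constructor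
  · rw [show Real.sqrt 2 - 1 = Real.sqrt ((Real.sqrt 2 - 1)^2) from
      (Real.sqrt_sq (by linarith)).symm]
    apply Real.sqrt_lt_sqrt (by positivity)
    rw [lt_div_iff₀ hδ2]
    calc (Real.sqrt 2 - 1)^2 * (t + s)^2
        = ((Real.sqrt 2 - 1)^2 * (t + s)) * (t + s) := by ring
      _ < (s - t) * (t + s) := mul_lt_mul_of_pos_right h1 hδ
      _ = 1 + t^2 := by linear_combination hs2
  · rw [show Real.sqrt 2 + 1 = Real.sqrt ((Real.sqrt 2 + 1)^2) from
      (Real.sqrt_sq (by linarith)).symm]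
    apply Real.sqrt_lt_sqrt (by positivity)
    rw [div_lt_iff₀ hδ2]
    calc (1:ℝ) + t^2 = (s - t) * (t + s) := by linear_combination -hs2
      _ < ((Real.sqrt 2 + 1)^2 * (t + s)) * (t + s) := mul_lt_mul_of_pos_right h2 hδ
      _ = (Real.sqrt 2 + 1)^2 * (t + s)^2 := by ring
end

section
/- Define f_m^I(r,θ) = (x₀,x₁,x₂,x₃) by x₀ ± x₃ = ((m²−1)/(4m)) r^{±1} (2 cos mθ − ((m∓1)/(m±1)) rᵐ) and x₁ + i x₂ = ((m−1)²/(4m)) e^{i(m+1)θ} + ((m+1)²/(4m)) e^{−i(m−1)θ} − e^{iθ}((m²−1)/(4m)) rᵐ. Then for all r ≠ 0 and θ ∈ R, the point (x₀,x₁,x₂,x₃) satisfies −x₀² + x₁² + x₂² + x₃² = 1, i.e. f_m^I maps into de Sitter space S^3_1. -/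
/-- x₀ + x₃: the `+` branch of x₀ ± x₃ = ((m²−1)/(4m)) r^{±1}(2cos mθ − ((m∓1)/(m±1))rᵐ). -/
noncomputable def Aplus (m : ℕ) (r θ : ℝ) : ℝ :=
  (((m:ℝ)^2 - 1)/(4*m)) * r * (2 * Real.cos (m*θ) - (((m:ℝ) - 1)/((m:ℝ) + 1)) * r^m)

/-- x₀ − x₃: the `−` branch. -/
noncomputable def Aminus (m : ℕ) (r θ : ℝ) : ℝ :=
  (((m:ℝ)^2 - 1)/(4*m)) * r⁻¹ * (2 * Real.cos (m*θ) - (((m:ℝ) + 1)/((m:ℝ) - 1)) * r^m)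

noncomputable def x0I (m : ℕ) (r θ : ℝ) : ℝ := (Aplus m r θ + Aminus m r θ) / 2
noncomputable def x3I (m : ℕ) (r θ : ℝ) : ℝ := (Aplus m r θ - Aminus m r θ) / 2

/-- Real part of x₁ + ix₂. -/
noncomputable def x1I (m : ℕ) (r θ : ℝ) : ℝ :=
  (((m:ℝ) - 1)^2/(4*m)) * Real.cos (((m:ℝ) + 1)*θ)
  + (((m:ℝ) + 1)^2/(4*m)) * Real.cos (((m:ℝ) - 1)*θ)
  - (((m:ℝ)^2 - 1)/(4*m)) * r^m * Real.cos θ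

/-- Imaginary part of x₁ + ix₂. -/
noncomputable def x2I (m : ℕ) (r θ : ℝ) : ℝ :=
  (((m:ℝ) - 1)^2/(4*m)) * Real.sin (((m:ℝ) + 1)*θ)
  - (((m:ℝ) + 1)^2/(4*m)) * Real.sin (((m:ℝ) - 1)*θ)
  - (((m:ℝ)^2 - 1)/(4*m)) * r^m * Real.sin θ

/-- f_m^I maps into de Sitter space S³₁. -/
theorem stmt5 (m : ℕ) (hm : 2 ≤ m) (r θ : ℝ) (hr : r ≠ 0) :
    -(x0I m r θ)^2 + (x1I m r θ)^2 + (x2I m r θ)^2 + (x3I m r θ)^2 = 1 := by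
  have hm2 : (2:ℝ) ≤ (m:ℝ) := by exact_mod_cast hm
  have h0 : (m:ℝ) ≠ 0 := by positivity
  have hp : (m:ℝ) + 1 ≠ 0 := by positivity
  have hq : (m:ℝ) - 1 ≠ 0 := by nlinarith
  unfold x0I x3I x1I x2I Aplus Aminus
  have e1 : ((m:ℝ)+1)*θ = (m:ℝ)*θ + θ := by ring
  have e2 : ((m:ℝ)-1)*θ = (m:ℝ)*θ - θ := by ring
  rw [e1, e2, Real.cos_add, Real.sin_add, Real.cos_sub, Real.sin_sub]
  field_simp
  ring_nf
  simp only [Real.sin_sq]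
  ring
end

section
/- Fix m ≥ 2 and k ∈ {0,…,2m−1}, and let α_k = (2k+1)π/(2m). For any t ∈ R, set ζ_j = (1/j, θ_j) for j large, where θ_j = (1/m)cos^{-1}(4mt/(j(m²−1))) with cos^{-1} : (−1,1) → (mα_k − π/2, mα_k + π/2). Then f̃_m^I(ζ_j) converges to the point Q_{k,t} = (t, γ_m(α_k), −t) as j → ∞, where γ_m is the limit trochoid. In particular every point of the light-like line L_k = {(t, γ_m(α_k), −t) : t ∈ R} is a limit of points of the image of f̃_m^I. -/
/-- The extension f̃_m^I as a map into ℝ⁴ = ℝ × ℝ × ℝ × ℝ. -/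
noncomputable def ftildeI (m : ℕ) (r θ : ℝ) : ℝ × ℝ × ℝ × ℝ :=
  (x0I m r θ, x1I m r θ, x2I m r θ, x3I m r θ)

/-- The limit curve γ_m. -/
noncomputable def gammaM (m : ℕ) (θ : ℝ) : ℝ × ℝ :=
  ((((m:ℝ) - 1)^2 * Real.cos (((m:ℝ) + 1)*θ) + ((m:ℝ) + 1)^2 * Real.cos (((m:ℝ) - 1)*θ)) / (4*m),
   (((m:ℝ) - 1)^2 * Real.sin (((m:ℝ) + 1)*θ) - ((m:ℝ) + 1)^2 * Real.sin (((m:ℝ) - 1)*θ)) / (4*m))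

/-- The branch of cos⁻¹ : (−1,1) → (mα_k − π/2, mα_k + π/2), where
mα_k = (2k+1)π/2; explicitly cos⁻¹(u) = (2k+1)π/2 + (−1)^{k+1} arcsin u. -/
noncomputable def cosInvBranch (k : ℕ) (u : ℝ) : ℝ :=
  (2*(k:ℝ) + 1) * Real.pi / 2 + (-1 : ℝ)^(k+1) * Real.arcsin u

set_option maxHeartbeats 1000000

lemma cos_kpi (k : ℕ) : Real.cos ((k:ℝ) * Real.pi) = (-1:ℝ)^k := by
  simpa using Real.cos_nat_mul_pi_sub 0 k

lemma cos_cosInvBranch (k : ℕ) (u : ℝ) (h1 : -1 ≤ u) (h2 : u ≤ 1) :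
    Real.cos (cosInvBranch k u) = u := by
  have hsin : Real.sin ((-1:ℝ)^(k+1) * Real.arcsin u) = (-1:ℝ)^(k+1) * u := by
    rcases Nat.even_or_odd (k+1) with h | h
    · rw [h.neg_one_pow]; simpa using Real.sin_arcsin h1 h2
    · rw [h.neg_one_pow]; simpa using Real.sin_arcsin h1 h2
  have ha : (2*(k:ℝ)+1)*Real.pi/2 = (k:ℝ)*Real.pi + Real.pi/2 := by ring
  rw [cosInvBranch, ha, add_assoc, Real.cos_add, Real.cos_add, Real.sin_add,
    Real.sin_nat_mul_pi, cos_kpi, Real.cos_pi_div_two, Real.sin_pi_div_two, hsin]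
  have hp : (-1:ℝ)^k * (-1:ℝ)^(k+1) = -1 := by
    rw [← pow_add]; exact Odd.neg_one_pow ⟨k, by ring⟩
  linear_combination (-u) * hp

open Filter in
/-- along ζ_j = (1/j, (1/m)cos⁻¹(4mt/(j(m²−1)))), the extension
f̃_m^I converges to Q_{k,t} = (t, γ_m(α_k), −t); hence every point of the
light-like line L_k is a limit of points of the image of f̃_m^I. -/
theorem stmt13 (m k : ℕ) (hm : 2 ≤ m) (hk : k < 2*m) (t : ℝ) :
    Tendsto
      (fun j : ℕ =>
        ftildeI m (1/(j:ℝ))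
          ((1/(m:ℝ)) * cosInvBranch k (4*(m:ℝ)*t / ((j:ℝ)*((m:ℝ)^2 - 1)))))
      atTop
      (nhds (t, (gammaM m ((2*(k:ℝ) + 1) * Real.pi / (2*(m:ℝ)))).1,
                (gammaM m ((2*(k:ℝ) + 1) * Real.pi / (2*(m:ℝ)))).2, -t)) := by

  have hm2 : (2:ℝ) ≤ (m:ℝ) := by exact_mod_cast hm
  have hmne : (m:ℝ) ≠ 0 := by linarith
  have hm1 : (m:ℝ)^2 - 1 > 0 := by nlinarith
  have hm1ne : (m:ℝ)^2 - 1 ≠ 0 := ne_of_gt hm1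
  set u : ℕ → ℝ := fun j => 4*(m:ℝ)*t / ((j:ℝ)*((m:ℝ)^2 - 1)) with hu_def
  set θ : ℕ → ℝ := fun j => (1/(m:ℝ)) * cosInvBranch k (u j) with hθ_def
  set α : ℝ := (2*(k:ℝ) + 1) * Real.pi / (2*(m:ℝ)) with hα_def
  have hr : Tendsto (fun j : ℕ => 1/(j:ℝ)) atTop (nhds 0) :=
    tendsto_one_div_atTop_nhds_zero_nat
  have hu : Tendsto u atTop (nhds 0) := by
    have heq : u = fun j : ℕ => (4*(m:ℝ)*t/((m:ℝ)^2 - 1)) * (1/(j:ℝ)) := by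
      funext j; simp only [hu_def]
      rw [mul_comm ((j:ℕ):ℝ), ← div_div, div_eq_mul_one_div]
    rw [heq]
    simpa using hr.const_mul (4*(m:ℝ)*t/((m:ℝ)^2 - 1))
  have hcontB : Continuous (cosInvBranch k) := by
    unfold cosInvBranch
    exact continuous_const.add (continuous_const.mul Real.continuous_arcsin)
  have hθ : Tendsto θ atTop (nhds α) := by
    have h0 : cosInvBranch k 0 = (2*(k:ℝ) + 1) * Real.pi / 2 := by
      simp [cosInvBranch]
    have h1 : Tendsto (fun j : ℕ => cosInvBranch k (u j)) atTop
        (nhds ((2*(k:ℝ) + 1) * Real.pi / 2)) := by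
      rw [← h0]; exact ((hcontB.tendsto 0).comp hu)
    have h2 := h1.const_mul (1/(m:ℝ))
    have : (1/(m:ℝ)) * ((2*(k:ℝ) + 1) * Real.pi / 2) = α := by
      rw [hα_def]; field_simp
    rwa [this] at h2
  -- eventually cos(m θ j) = u j
  have hsmall : ∀ᶠ j in atTop, |u j| < 1 := by
    have := hu (Metric.ball_mem_nhds (0:ℝ) one_pos)
    filter_upwards [this] with j hj
    simpa [Real.dist_eq] using hj
  have hcos : ∀ᶠ j in atTop, Real.cos ((m:ℝ) * θ j) = u j := by
    filter_upwards [hsmall] with j hj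
    have : (m:ℝ) * θ j = cosInvBranch k (u j) := by
      simp only [hθ_def]; field_simp
    rw [this]
    exact cos_cosInvBranch k (u j) (by cases abs_lt.1 hj; linarith) (le_of_lt (abs_lt.1 hj).2)
  -- Aminus limit
  set C : ℝ := ((m:ℝ)^2 - 1)/(4*(m:ℝ)) with hC_def
  set D : ℝ := ((m:ℝ) + 1)/((m:ℝ) - 1) with hD_def
  have hev : ∀ᶠ j : ℕ in atTop,
      Aminus m (1/(j:ℝ)) (θ j) = 2*t - C*D*(1/(j:ℝ))^(m-1) := by
    filter_upwards [hcos, eventually_ge_atTop 1] with j hcj hj1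
    have hj0 : (j:ℝ) ≠ 0 := by
      have : (1:ℝ) ≤ (j:ℝ) := by exact_mod_cast hj1
      linarith
    have hCu : C * ((j:ℝ) * u j) = t := by
      simp only [hC_def, hu_def]
      field_simp
    have hpow : (j:ℝ) * (1/(j:ℝ))^m = (1/(j:ℝ))^(m-1) := by
      have hms : m = (m-1)+1 := (Nat.succ_pred_eq_of_pos (by omega)).symm
      rw [hms, pow_succ]
      field_simp
      ring
      rw [Nat.add_sub_cancel_left]
    calc Aminus m (1/(j:ℝ)) (θ j)
        = C * (j:ℝ) * (2 * u j - D * (1/(j:ℝ))^m) := by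
          rw [Aminus, hcj]
          rw [one_div, inv_inv]
      _ = 2*(C*((j:ℝ)*u j)) - C*D*((j:ℝ)*(1/(j:ℝ))^m) := by ring
      _ = 2*t - C*D*(1/(j:ℝ))^(m-1) := by rw [hCu, hpow]
  have hAminus : Tendsto (fun j : ℕ => Aminus m (1/(j:ℝ)) (θ j)) atTop (nhds (2*t)) := by
    have hp : Tendsto (fun j : ℕ => (1/(j:ℝ))^(m-1)) atTop (nhds 0) := by
      have := hr.pow (m-1)
      simpa [zero_pow (show m-1 ≠ 0 by omega)] using this
    have : Tendsto (fun j : ℕ => 2*t - C*D*(1/(j:ℝ))^(m-1)) atTop (nhds (2*t)) := by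
      simpa using tendsto_const_nhds.sub (hp.const_mul (C*D))
    exact this.congr' (by filter_upwards [hev] with j h using h.symm)
  -- continuity-based limits
  have hprod : Tendsto (fun j : ℕ => ((1/(j:ℝ), θ j) : ℝ × ℝ)) atTop (nhds (0, α)) :=
    hr.prodMk_nhds hθ
  have hAplus : Tendsto (fun j : ℕ => Aplus m (1/(j:ℝ)) (θ j)) atTop (nhds 0) := by
    have hc : Continuous (fun p : ℝ × ℝ => Aplus m p.1 p.2) := by
      unfold Aplus; fun_prop
    have h0 := (hc.tendsto ((0:ℝ), α)).comp hprod
    simp only [Function.comp_def] at h0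
    have h : Tendsto (fun j : ℕ => Aplus m (1/(j:ℝ)) (θ j)) atTop
        (nhds (Aplus m 0 α)) := h0
    rw [show Aplus m 0 α = 0 by simp [Aplus]] at h
    exact h
  have hx1 : Tendsto (fun j : ℕ => x1I m (1/(j:ℝ)) (θ j)) atTop
      (nhds ((gammaM m α).1)) := by
    have hc : Continuous (fun p : ℝ × ℝ => x1I m p.1 p.2) := by
      unfold x1I; fun_prop
    have h0 := (hc.tendsto ((0:ℝ), α)).comp hprod
    simp only [Function.comp_def] at h0
    have h : Tendsto (fun j : ℕ => x1I m (1/(j:ℝ)) (θ j)) atTop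
        (nhds (x1I m 0 α)) := h0
    have : x1I m 0 α = (gammaM m α).1 := by
      simp [x1I, gammaM, zero_pow (show m ≠ 0 by omega)]
      ring
    rw [this] at h
    exact h
  have hx2 : Tendsto (fun j : ℕ => x2I m (1/(j:ℝ)) (θ j)) atTop
      (nhds ((gammaM m α).2)) := by
    have hc : Continuous (fun p : ℝ × ℝ => x2I m p.1 p.2) := by
      unfold x2I; fun_prop
    have h0 := (hc.tendsto ((0:ℝ), α)).comp hprod
    simp only [Function.comp_def] at h0
    have h : Tendsto (fun j : ℕ => x2I m (1/(j:ℝ)) (θ j)) atTop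
        (nhds (x2I m 0 α)) := h0
    have : x2I m 0 α = (gammaM m α).2 := by
      simp [x2I, gammaM, zero_pow (show m ≠ 0 by omega)]
      ring
    rw [this] at h
    exact h
  have hx0 : Tendsto (fun j : ℕ => x0I m (1/(j:ℝ)) (θ j)) atTop (nhds t) := by
    have h := (hAplus.add hAminus).div_const 2
    have e : (0 + 2*t)/2 = t := by ring
    rw [e] at h
    exact h.congr (fun j => by simp [x0I])
  have hx3 : Tendsto (fun j : ℕ => x3I m (1/(j:ℝ)) (θ j)) atTop (nhds (-t)) := by
    have h := (hAplus.sub hAminus).div_const 2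
    have e : (0 - 2*t)/2 = -t := by ring
    rw [e] at h
    exact h.congr (fun j => by simp [x3I])
  simp only [ftildeI]
  exact hx0.prodMk_nhds (hx1.prodMk_nhds (hx2.prodMk_nhds hx3))
end
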